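/- Let d ∈ ℕ and let a₁, a₂ : I → 𝒜_d be functions such that for k = 1,2: ρ(i) = ρ(i′) implies a_k(i) = a_k(i′) for all i, i′ ∈ I, and the subgroup of 𝒜_d generated by {a_k(i) : i ∈ I} acts transitively on Y_d. Consider the skew-product endomorphisms T̄_k(x,y) = (T_ρ x, a_k(x₁)⁻¹ y) on (X_ρ × Y_d, m_ρ × uniform), k = 1,2 (the Markov shifts of the d-extensions Ī_{a₁}, Ī_{a₂} of the Bernoulli graph). Then T̄₁ and T̄₂ are isomorphic mod 0 if and only if a₁ and a₂ are conjugate in 𝒜_d, i.e. there exists w₀ ∈ 𝒜_d with a₂(i)·w₀ = w₀·a₁(i) for all i ∈ I. -/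

import Mathlib

open MeasureTheory
open scoped ENNReal Classical

namespace OneSidedMarkov

noncomputable section

/-- The canonical σ-algebra on a sequence space over a (countable) alphabet:
the product of the discrete σ-algebras on the coordinates. -/
instance seqMS (E : Type*) : MeasurableSpace (ℕ → E) :=
  @MeasurableSpace.pi ℕ (fun _ => E) fun _ => ⊤

/-- Measurability of a map into a (countable) set carrying the discrete σ-algebra. -/
def DMeasurable {X : Type*} [MeasurableSpace X] {A : Type*} (f : X → A) : Prop :=
  ∀ a : A, MeasurableSet (f ⁻¹' {a})

/-- The cylinder set determined by a finite word. -/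
def cyl {E : Type*} {n : ℕ} (g : Fin n → E) : Set (ℕ → E) :=
  {x | ∀ k : Fin n, x (k : ℕ) = g k}

/-- The one-sided shift on a sequence space. -/
def shift {E : Type*} (x : ℕ → E) : ℕ → E := fun n => x (n + 1)

/-- `ρ` is a strictly positive probability vector. -/
def IsProbVector {I : Type*} (ρ : I → ℝ≥0∞) : Prop :=
  (∀ i, 0 < ρ i) ∧ ∑' i, ρ i = 1

/-- `μ` is the Bernoulli (product) measure with marginal `ρ`. -/
def IsProductMeasure {I : Type*} (ρ : I → ℝ≥0∞) (μ : Measure (ℕ → I)) : Prop :=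
  IsProbabilityMeasure μ ∧ ∀ (n : ℕ) (w : Fin n → I), μ (cyl w) = ∏ k, ρ (w k)

/-- Isomorphism mod 0 of two measure-preserving systems: a measure-preserving map,
invertible after discarding null sets, intertwining the transformations a.e. -/
def IsomorphicMod0 {X Y : Type*} [MeasurableSpace X] [MeasurableSpace Y]
    (μ : Measure X) (T : X → X) (ν : Measure Y) (S : Y → Y) : Prop :=
  ∃ Φ : X → Y, MeasurePreserving Φ μ ν ∧ (∀ᵐ x ∂μ, Φ (T x) = S (Φ x)) ∧
    ∃ Ψ : Y → X, MeasurePreserving Ψ ν μ ∧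
      (∀ᵐ x ∂μ, Ψ (Φ x) = x) ∧ ∀ᵐ y ∂ν, Φ (Ψ y) = y

/-! ### Stochastic graphs -/

/-- The data of a weighted directed graph: edge set `E`, vertex set `V`,
source and target maps, and weights on edges. -/
structure PreGraph (E V : Type*) where
  s : E → V
  t : E → V
  p : E → ℝ≥0∞

variable {E V F W : Type*}

namespace PreGraph

/-- A weighted directed graph is stochastic if weights are positive, the weights of the
edges starting at any given vertex sum to `1`, and every vertex has an outgoing and
an incoming edge. -/
def IsStochastic (G : PreGraph E V) : Prop :=
  (∀ g, 0 < G.p g) ∧ (∀ u : V, ∑' g : {g : E // G.s g = u}, G.p g.1 = 1) ∧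
    (∀ u : V, ∃ g, G.s g = u) ∧ ∀ v : V, ∃ g, G.t g = v

/-- `p0` is a stationary probability on the vertices of `G`. -/
def IsStationary (G : PreGraph E V) (p0 : V → ℝ≥0∞) : Prop :=
  (∀ u, 0 < p0 u) ∧ ∑' u, p0 u = 1 ∧
    ∀ v : V, ∑' g : {g : E // G.t g = v}, G.p g.1 * p0 (G.s g.1) = p0 v

/-- `G` is positively recurrent iff a stationary probability exists. -/
def PositivelyRecurrent (G : PreGraph E V) : Prop := ∃ p0, G.IsStationary p0

/-- One-step reachability along a directed edge. -/
def Step (G : PreGraph E V) (u v : V) : Prop := ∃ g, G.s g = u ∧ G.t g = v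

/-- `G` is irreducible: any ordered pair of vertices is joined by a finite directed path. -/
protected def Irreducible (G : PreGraph E V) : Prop :=
  ∀ u v : V, Relation.ReflTransGen G.Step u v

/-- The (backward) path condition for finite words of edges:
`s (g k) = t (g (k+1))` for consecutive indices. -/
def IsPathW (G : PreGraph E V) {n : ℕ} (g : Fin n → E) : Prop :=
  ∀ (k : ℕ) (h : k + 1 < n), G.s (g ⟨k, Nat.lt_of_succ_lt h⟩) = G.t (g ⟨k + 1, h⟩)

/-- The set of admissible one-sided infinite (backward) paths. -/
def PathSet (G : PreGraph E V) : Set (ℕ → E) := {x | ∀ n, G.s (x n) = G.t (x (n + 1))}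

/-- `m` is the stationary Markov measure of `(G, p0)`, characterized by its values on
cylinder sets: the cylinder over a backward path `g₁ … gₙ` has mass
`p g₁ ⋯ p gₙ · p0 (s gₙ)`, and cylinders over non-paths are null. -/
def IsMarkovMeasure (G : PreGraph E V) (p0 : V → ℝ≥0∞) (m : Measure (ℕ → E)) : Prop :=
  IsProbabilityMeasure m ∧
    ∀ (n : ℕ) (g : Fin (n + 1) → E),
      m (cyl g) =
        if G.IsPathW g then (∏ k, G.p (g k)) * p0 (G.s (g (Fin.last n))) else 0

end PreGraph

/-- A (weight-preserving, deterministic) homomorphism of weighted directed graphs. -/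
structure GraphHom (G : PreGraph E V) (H : PreGraph F W) where
  toFun : E → F
  vFun : V → W
  map_s : ∀ g, H.s (toFun g) = vFun (G.s g)
  map_t : ∀ g, H.t (toFun g) = vFun (G.t g)
  map_p : ∀ g, H.p (toFun g) = G.p g
  v_surj : Function.Surjective vFun
  deterministic : ∀ (u : V) (h : F), H.s h = vFun u → ∃! g : E, G.s g = u ∧ toFun g = h

namespace GraphHom

variable {G : PreGraph E V} {H : PreGraph F W}

/-- The factor map induced on path spaces by a graph homomorphism. -/
def pathMap (φ : GraphHom G H) (x : ℕ → E) : ℕ → F := fun n => φ.toFun (x n)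

/-- `φ` has degree `d` (with respect to the Markov measure `m` on the source):
almost every fiber of the induced factor map, within the path space, has exactly
`d` elements. -/
def HasDegree (φ : GraphHom G H) (m : Measure (ℕ → E)) (d : ℕ) : Prop :=
  ∀ᵐ x ∂m, (G.PathSet ∩ φ.pathMap ⁻¹' {φ.pathMap x}).Finite ∧
    (G.PathSet ∩ φ.pathMap ⁻¹' {φ.pathMap x}).ncard = d

/-- A homomorphism is an isomorphism of graphs if it is bijective on edges and
on vertices. -/
def IsIso (φ : GraphHom G H) : Prop :=
  Function.Bijective φ.toFun ∧ Function.Bijective φ.vFun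

end GraphHom

/-- The standard Bernoulli graph: a single vertex, edge set `I` with weights `ρ`. -/
def bernoulliGraph {I : Type*} (ρ : I → ℝ≥0∞) : PreGraph I Unit :=
  ⟨fun _ => (), fun _ => (), ρ⟩

/-- The graph skew product `H̄ₐ` of `H` by a function `a` into the permutations of
`Fin d`. -/
def gsp (H : PreGraph F W) {d : ℕ} (a : F → Equiv.Perm (Fin d)) :
    PreGraph (F × Fin d) (W × Fin d) where
  s := fun hy => (H.s hy.1, hy.2)
  t := fun hy => (H.t hy.1, a hy.1 hy.2)
  p := fun hy => H.p hy.1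

/-- Two functions `a₁ a₂ : H → 𝒜_d` are cohomologous with respect to `H`. -/
def Cohomologous (H : PreGraph F W) {d : ℕ} (a₁ a₂ : F → Equiv.Perm (Fin d)) : Prop :=
  ∃ w : W → Equiv.Perm (Fin d), ∀ h, a₂ h * w (H.s h) = w (H.t h) * a₁ h

/-- The map `fᵢ : G⁰ → G⁰` induced by a homomorphism onto the Bernoulli graph:
`fᵢ u` is the target of the unique edge starting at `u` sent to `i`. -/
def GraphHom.fmap {I : Type*} {G : PreGraph E V} {ρ : I → ℝ≥0∞}
    (φ : GraphHom G (bernoulliGraph ρ)) (i : I) (u : V) : V :=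
  G.t (φ.deterministic u i (Subsingleton.elim _ _)).exists.choose

/-- Composite of the maps determined by a finite word. -/
def compWord {U I : Type*} (f : I → U → U) {n : ℕ} (w : Fin n → I) : U → U :=
  (List.ofFn fun k => f (w k)).foldr (· ∘ ·) id

/-- The semigroup (set of all nonempty finite composites) generated by a family of
self-maps. -/
def genSem {U I : Type*} (f : I → U → U) : Set (U → U) :=
  {g | ∃ (n : ℕ) (w : Fin (n + 1) → I), g = compWord f w}

/-- `L` is a persistent `d`-set for the semigroup `S` of self-maps of `U`. -/
def PersistentSet {U : Type*} (S : Set (U → U)) (d : ℕ) (L : Set U) : Prop :=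
  L.Finite ∧ L.ncard = d ∧ (∀ f ∈ S, (f '' L).ncard = d) ∧
    ∀ A : Set U, A.Finite → ∃ f ∈ S, f '' A ⊆ L

/-- The semigroup `S` is `d`-contractive. -/
def IsDContractive {U : Type*} (S : Set (U → U)) (d : ℕ) : Prop :=
  ∃ L, PersistentSet S d L

/-- The itinerary (canonical factor) map of an endomorphism `T` relative to `δ`. -/
def itin {X I : Type*} (T : X → X) (δ : X → I) (x : X) : ℕ → I := fun n => δ (T^[n] x)

/-- `δ ∈ Δ_ρ(T)`: `δ` has law `ρ`, the σ-algebra generated by `δ` is independent of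
`T⁻¹𝓑`, and together they generate the whole σ-algebra modulo null sets. -/
def IsUniformGenerator {X : Type*} [mX : MeasurableSpace X] {I : Type*} (ρ : I → ℝ≥0∞)
    (m : Measure X) (T : X → X) (δ : X → I) : Prop :=
  DMeasurable δ ∧ (∀ i, m (δ ⁻¹' {i}) = ρ i) ∧
    ProbabilityTheory.Indep (MeasurableSpace.comap δ ⊤) (mX.comap T) m ∧
    ∀ A : Set X, MeasurableSet A →
      ∃ B : Set X, MeasurableSet[MeasurableSpace.comap δ ⊤ ⊔ mX.comap T] B ∧
        m (symmDiff A B) = 0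

/-- The fibers of `Φ` have cardinality `d ∈ ℕ∞` almost everywhere. -/
def HasFiberCard {X : Type*} [MeasurableSpace X] {I : Type*} (m : Measure X)
    (Φ : X → ℕ → I) (d : ℕ∞) : Prop :=
  ∀ᵐ x ∂m, (Φ ⁻¹' {Φ x}).encard = d

/-- `d` is the minimal index `d(T)` of the `ρ`-uniform endomorphism `T`. -/
def HasMinimalIndex {X : Type*} [MeasurableSpace X] {I : Type*} (ρ : I → ℝ≥0∞)
    (m : Measure X) (T : X → X) (d : ℕ∞) : Prop :=
  (∃ δ : X → I, IsUniformGenerator ρ m T δ ∧ HasFiberCard m (itin T δ) d) ∧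
    ∀ (δ : X → I) (d' : ℕ∞),
      IsUniformGenerator ρ m T δ → HasFiberCard m (itin T δ) d' → d ≤ d'

/-- The uniform probability measure on `Fin d`. -/
def unif (d : ℕ) : Measure (Fin d) := (d : ℝ≥0∞)⁻¹ • Measure.count

/-- The `n`-stringing graph `G⁽ⁿ⁾`: edges are the backward paths of length `n+1`,
vertices the backward paths of length `n`. -/
def stringing (G : PreGraph E V) (n : ℕ) :
    PreGraph {g : Fin (n + 1) → E // G.IsPathW g} {g : Fin n → E // G.IsPathW g} where
  s := fun g => ⟨fun k => g.1 k.succ, fun k h => g.2 (k + 1) (Nat.succ_lt_succ h)⟩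
  t := fun g => ⟨fun k => g.1 k.castSucc, fun k h => g.2 k (Nat.lt_succ_of_lt h)⟩
  p := fun g => ∏ k, G.p (g.1 k)

/-- A `(π,ψ)`-extension in `Ext^d(I,ρ)`: a graph skew product `d`-extension
`H̄ₐ → H` of a positively recurrent graph `H` admitting a degree-one homomorphism
`ψ : H → I` onto the Bernoulli graph, with `H̄ₐ` irreducible. -/
structure PiPsiExt (I : Type) (ρ : I → ℝ≥0∞) (d : ℕ) where
  F : Type
  W : Type
  countF : Countable F
  countW : Countable W
  H : PreGraph F W
  stoch : H.IsStochastic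
  a : F → Equiv.Perm (Fin d)
  ψ : GraphHom H (bernoulliGraph ρ)
  p0 : W → ℝ≥0∞
  stat : H.IsStationary p0
  m : Measure (ℕ → F)
  markov : H.IsMarkovMeasure p0 m
  deg1 : ψ.HasDegree m 1
  irr : (gsp H a).Irreducible

/-- The partial order on `Ext^d(I,ρ)`: `P₁ ≼ P` via homomorphisms `κ, κ̄` making the
diagram commute, with `a₁ ∘ κ` cohomologous to `a`. -/
def ExtLE {I : Type} {ρ : I → ℝ≥0∞} {d : ℕ} (P₁ P : PiPsiExt I ρ d) : Prop :=
  ∃ (κ : GraphHom P.H P₁.H) (κb : GraphHom (gsp P.H P.a) (gsp P₁.H P₁.a)),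
    (∀ g : P.F × Fin d, (κb.toFun g).1 = κ.toFun g.1) ∧
    (∀ g : P.F, P.ψ.toFun g = P₁.ψ.toFun (κ.toFun g)) ∧
    Cohomologous P.H P.a (fun h => P₁.a (κ.toFun h))

/-- Equivalence of `(π,ψ)`-extensions: as `ExtLE` but with `κ, κ̄` isomorphisms. -/
def ExtEquiv {I : Type} {ρ : I → ℝ≥0∞} {d : ℕ} (P₁ P : PiPsiExt I ρ d) : Prop :=
  ∃ (κ : GraphHom P.H P₁.H) (κb : GraphHom (gsp P.H P.a) (gsp P₁.H P₁.a)),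
    κ.IsIso ∧ κb.IsIso ∧
    (∀ g : P.F × Fin d, (κb.toFun g).1 = κ.toFun g.1) ∧
    (∀ g : P.F, P.ψ.toFun g = P₁.ψ.toFun (κ.toFun g)) ∧
    Cohomologous P.H P.a (fun h => P₁.a (κ.toFun h))

/-- An irreducible element of `(Ext^d(I,ρ), ≼)`. -/
def ExtIrreducible {I : Type} {ρ : I → ℝ≥0∞} {d : ℕ} (P : PiPsiExt I ρ d) : Prop :=
  ∀ P₁ : PiPsiExt I ρ d, ExtLE P₁ P → ExtEquiv P₁ P

end

end OneSidedMarkov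

namespace OneSidedMarkov

open MeasureTheory
open scoped ENNReal

/-- The skew product endomorphism `T̄(x,y) = (T_ρ x, a(x₁)⁻¹ y)` on `X_ρ × Y_d`. -/
def bernSkew {I : Type*} {d : ℕ} (a : I → Equiv.Perm (Fin d))
    (q : (ℕ → I) × Fin d) : (ℕ → I) × Fin d :=
  (shift q.1, (a (q.1 0))⁻¹ q.2)

/-! Conjugacy by `w₀` gives the isomorphism `id × w₀`. Conversely, both skew products are
`ρ`-uniform with inverse branches `(x, y) ↦ (i x, a i y)` of weight `ρ i`. An isomorphism `Φ`
must carry a branch of weight `ρ i` to a branch of the same weight, so `Φ` preserves `ρ (x 0)`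
almost everywhere; as `a₂` is constant on the level sets of `ρ`, the fibre map
`F x = fun y => (Φ (x, y)).2` satisfies `F x = a₂ (x 0) ∘ F (shift x) ∘ (a₁ (x 0))⁻¹`.
Iterating, on a cylinder of length `n` the level set `{F = c}` is the `n`-th shift preimage of
another level set, so the likeliest value `c`, of probability `t`, has relative density at most
`t` in every cylinder. Approximating `{F = c}` by unions of cylinders gives `t ≤ t²`, so `F = c`
almost everywhere, and `c` intertwines `a₁` and `a₂`. The same applied to `Φ⁻¹` inverts `c`. -/

section SequenceSpace

variable {I : Type*}

def prefixWord (n : ℕ) (x : ℕ → I) : Fin n → I := fun k => x k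

def seqCons (i : I) (x : ℕ → I) : ℕ → I
  | 0 => i
  | k + 1 => x k

def wordProd {β : Type*} (σ : I → Equiv.Perm β) {n : ℕ} (w : Fin n → I) : Equiv.Perm β :=
  (List.ofFn fun k => σ (w k)).prod

theorem seqCons_apply_zero_shift (x : ℕ → I) : seqCons (x 0) (shift x) = x := by
  funext k
  cases k <;> rfl

theorem shift_iterate_apply (n : ℕ) (x : ℕ → I) (k : ℕ) : shift^[n] x k = x (n + k) := by
  induction n generalizing x with
  | zero => simp
  | succ n ih => rw [Function.iterate_succ_apply, ih, shift, Nat.succ_add]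

theorem cyl_eq_preimage_prefixWord {n : ℕ} (w : Fin n → I) : cyl w = prefixWord n ⁻¹' {w} := by
  ext x
  simp [cyl, prefixWord, funext_iff]

theorem preimage_prefixWord_of_le {n N : ℕ} (h : n ≤ N) (W : Set (Fin n → I)) :
    prefixWord n ⁻¹' W = prefixWord N ⁻¹' ((· ∘ Fin.castLE h) ⁻¹' W) :=
  rfl

theorem cyl_inter_preimage_shift_iterate {n m : ℕ} (w : Fin n → I) (v : Fin m → I) :
    cyl w ∩ shift^[n] ⁻¹' cyl v = cyl (Fin.append w v) := by
  ext x
  simp only [cyl, Set.mem_inter_iff, Set.mem_preimage, Set.mem_ofPred_eq, shift_iterate_apply,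
    Fin.forall_fin_add, Fin.append_left, Fin.append_right, Fin.val_castAdd, Fin.val_natAdd]

theorem wordProd_prefixWord_succ {β : Type*} (σ : I → Equiv.Perm β) (n : ℕ) (x : ℕ → I) :
    wordProd σ (prefixWord (n + 1) x) = σ (x 0) * wordProd σ (prefixWord n (shift x)) := by
  simp [wordProd, List.ofFn_succ, prefixWord, shift]

theorem measurableSet_cyl {n : ℕ} (w : Fin n → I) : MeasurableSet (cyl w) := by
  let : MeasurableSpace I := ⊤
  have : cyl w = ⋂ k : Fin n, (fun x : ℕ → I => x k) ⁻¹' {w k} := by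
    ext x
    simp [cyl]
  rw [this]
  exact .iInter fun k => measurable_pi_apply (k : ℕ) trivial

theorem measurable_shift : Measurable (shift : (ℕ → I) → ℕ → I) := by
  let : MeasurableSpace I := ⊤
  exact measurable_pi_lambda _ fun n => measurable_pi_apply (n + 1)

theorem measurable_seqCons (i : I) : Measurable (seqCons i) := by
  let : MeasurableSpace I := ⊤
  refine measurable_pi_lambda _ fun k => ?_
  cases k with
  | zero => exact measurable_const
  | succ k => exact measurable_pi_apply k

theorem preimage_apply_zero_eq_cyl (i : I) :
    (fun x : ℕ → I => x 0) ⁻¹' {i} = cyl (fun _ : Fin 1 => i) := by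
  ext x
  simp [cyl]

theorem dMeasurable_apply_zero : DMeasurable fun x : ℕ → I => x 0 :=
  fun i => preimage_apply_zero_eq_cyl i ▸ measurableSet_cyl _

variable (I) in
def prefixSets : Set (Set (ℕ → I)) :=
  {A | ∃ (n : ℕ) (W : Set (Fin n → I)), A = prefixWord n ⁻¹' W}

theorem exists_common_prefixWord {A B : Set (ℕ → I)} (hA : A ∈ prefixSets I)
    (hB : B ∈ prefixSets I) :
    ∃ (N : ℕ) (V W : Set (Fin N → I)), A = prefixWord N ⁻¹' V ∧ B = prefixWord N ⁻¹' W := by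
  obtain ⟨n, V, rfl⟩ := hA
  obtain ⟨m, W, rfl⟩ := hB
  exact ⟨max n m, _, _, preimage_prefixWord_of_le (le_max_left n m) V,
    preimage_prefixWord_of_le (le_max_right n m) W⟩

theorem isSetRing_prefixSets : IsSetRing (prefixSets I) where
  empty_mem := ⟨0, ∅, rfl⟩
  union_mem A B hA hB := by
    obtain ⟨N, V, W, rfl, rfl⟩ := exists_common_prefixWord hA hB
    exact ⟨N, V ∪ W, rfl⟩
  sdiff_mem A B hA hB := by
    obtain ⟨N, V, W, rfl, rfl⟩ := exists_common_prefixWord hA hB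
    exact ⟨N, V \ W, rfl⟩

variable [Countable I]

theorem measurableSet_preimage_prefixWord {n : ℕ} (W : Set (Fin n → I)) :
    MeasurableSet (prefixWord n ⁻¹' W) := by
  rw [← Set.biUnion_of_singleton W, Set.preimage_iUnion₂]
  exact .biUnion W.to_countable fun w _ => cyl_eq_preimage_prefixWord w ▸ measurableSet_cyl w

theorem seqMS_eq_generateFrom_prefixSets :
    seqMS I = MeasurableSpace.generateFrom (prefixSets I) := by
  refine le_antisymm ?_ (MeasurableSpace.generateFrom_le ?_)
  · change @MeasurableSpace.pi ℕ (fun _ => I) (fun _ => ⊤) ≤ _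
    rw [MeasurableSpace.pi_eq_generateFrom_projections]
    refine MeasurableSpace.generateFrom_mono ?_
    rintro _ ⟨k, A, -, rfl⟩
    exact ⟨k + 1, (fun w => w (Fin.last k)) ⁻¹' A, rfl⟩
  · rintro _ ⟨n, W, rfl⟩
    exact measurableSet_preimage_prefixWord W

theorem measure_preimage_prefixWord (μ : Measure (ℕ → I)) {n : ℕ} (W : Set (Fin n → I)) :
    μ (prefixWord n ⁻¹' W) = ∑' w : W, μ (cyl (w : Fin n → I)) := by
  simp_rw [cyl_eq_preimage_prefixWord]
  exact (tsum_measure_preimage_singleton W.to_countable fun w _ =>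
    cyl_eq_preimage_prefixWord w ▸ measurableSet_cyl w).symm

theorem ext_of_cyl {μ ν : Measure (ℕ → I)} [IsFiniteMeasure μ]
    (h : ∀ (n : ℕ) (w : Fin n → I), μ (cyl w) = ν (cyl w)) : μ = ν := by
  have hC : ∀ A ∈ prefixSets I, μ A = ν A := by
    rintro _ ⟨n, W, rfl⟩
    simp_rw [measure_preimage_prefixWord, h]
  exact ext_of_generate_finite _ seqMS_eq_generateFrom_prefixSets
    isSetRing_prefixSets.isSetSemiring.isPiSystem hC (hC _ ⟨0, Set.univ, rfl⟩)

theorem exists_prefixSets_measure_symmDiff_lt (μ : Measure (ℕ → I)) [IsFiniteMeasure μ]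
    {S : Set (ℕ → I)} (hS : MeasurableSet S) {ε : ℝ≥0∞} (hε : 0 < ε) :
    ∃ A ∈ prefixSets I, μ (symmDiff A S) < ε :=
  exists_measure_symmDiff_lt_of_generateFrom_isSetRing isSetRing_prefixSets
    ⟨{Set.univ}, Set.countable_singleton _, by simpa using ⟨0, Set.univ, rfl⟩, by simp⟩
    seqMS_eq_generateFrom_prefixSets hS hε

end SequenceSpace

namespace IsProductMeasure

variable {I : Type*} {ρ : I → ℝ≥0∞} {μ : Measure (ℕ → I)}

theorem measure_preimage_apply_zero (hμ : IsProductMeasure ρ μ) (i : I) :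
    μ ((fun x => x 0) ⁻¹' {i}) = ρ i := by
  rw [preimage_apply_zero_eq_cyl, hμ.2]
  simp

variable [Countable I]

theorem measure_cyl_inter_preimage_shift_iterate (hμ : IsProductMeasure ρ μ) {n : ℕ}
    (w : Fin n → I) {E : Set (ℕ → I)} (hE : MeasurableSet E) :
    μ (cyl w ∩ shift^[n] ⁻¹' E) = μ (cyl w) * μ E := by
  have : IsProbabilityMeasure μ := hμ.1
  have hmeas : Measurable (shift^[n] : (ℕ → I) → ℕ → I) := measurable_shift.iterate n
  have hmap : (μ.restrict (cyl w)).map shift^[n] = μ (cyl w) • μ := by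
    refine ext_of_cyl fun m v => ?_
    rw [Measure.map_apply hmeas (measurableSet_cyl v), Measure.restrict_apply (hmeas
      (measurableSet_cyl v)), Set.inter_comm, cyl_inter_preimage_shift_iterate, Measure.smul_apply,
      smul_eq_mul, hμ.2, hμ.2, hμ.2, Fin.prod_univ_add]
    simp
  have := congrArg (· E) hmap
  simp only [Measure.map_apply hmeas hE, Measure.restrict_apply (hmeas hE), Measure.smul_apply,
    smul_eq_mul] at this
  rwa [Set.inter_comm] at this

theorem smul_map_seqCons (hμ : IsProductMeasure ρ μ) (i : I) :
    ρ i • μ.map (seqCons i) = μ.restrict ((fun x => x 0) ⁻¹' {i}) := by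
  ext E hE
  have hcons :
      (fun x => x 0) ⁻¹' {i} ∩ shift ⁻¹' (seqCons i ⁻¹' E) = E ∩ (fun x => x 0) ⁻¹' {i} := by
    ext x
    constructor
    · rintro ⟨rfl, hx⟩
      exact ⟨seqCons_apply_zero_shift x ▸ hx, rfl⟩
    · rintro ⟨hx, rfl⟩
      exact ⟨rfl, (seqCons_apply_zero_shift x).symm ▸ hx⟩
  have := hμ.measure_cyl_inter_preimage_shift_iterate (fun _ : Fin 1 => i)
    (measurable_seqCons i hE)
  rw [Function.iterate_one, ← preimage_apply_zero_eq_cyl, hcons,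
    hμ.measure_preimage_apply_zero] at this
  rw [Measure.smul_apply, Measure.map_apply (measurable_seqCons i) hE, smul_eq_mul,
    Measure.restrict_apply hE, this]

end IsProductMeasure

/-- The maps `ι i` are the inverse branches of `T` over the level sets of `δ`. The last field
says that `δ` has law `ρ` and is independent of the `T⁻¹`-measurable sets, as for a generator in
`IsUniformGenerator`. -/
structure HasBranches {X I : Type*} [MeasurableSpace X] (ρ : I → ℝ≥0∞) (m : Measure X)
    (T : X → X) (δ : X → I) (ι : I → X → X) : Prop where
  measurable : Measurable T
  dMeasurable_label : DMeasurable δ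
  measurable_branch : ∀ i, Measurable (ι i)
  apply_branch : ∀ i x, T (ι i x) = x
  label_branch : ∀ i x, δ (ι i x) = i
  branch_label_apply : ∀ x, ι (δ x) (T x) = x
  smul_map_branch : ∀ i, ρ i • m.map (ι i) = m.restrict (δ ⁻¹' {i})

namespace HasBranches

variable {X X' I : Type*} [MeasurableSpace X] [MeasurableSpace X']
  {ρ : I → ℝ≥0∞} {m : Measure X} {T : X → X} {δ : X → I} {ι : I → X → X}

theorem measure_preimage_branch (hT : HasBranches ρ m T δ ι) (i : I) {W : Set X}
    (hW : MeasurableSet W) : ρ i * m (ι i ⁻¹' W) = m (W ∩ δ ⁻¹' {i}) := by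
  simpa [Measure.map_apply (hT.measurable_branch i) hW, Measure.restrict_apply hW] using
    congrArg (· W) (hT.smul_map_branch i)

theorem preimage_branch_preimage (hT : HasBranches ρ m T δ ι) (i : I) (W : Set X) :
    ι i ⁻¹' (T ⁻¹' W) = W := by
  ext x
  simp [hT.apply_branch]

theorem quasiMeasurePreserving_branch (hT : HasBranches ρ m T δ ι) {i : I} (hi : ρ i ≠ 0) :
    Measure.QuasiMeasurePreserving (ι i) m m := by
  refine ⟨hT.measurable_branch i, Measure.AbsolutelyContinuous.mk fun W hW hW0 => ?_⟩
  have h := hT.measure_preimage_branch i hW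
  rw [measure_mono_null Set.inter_subset_left hW0, mul_eq_zero] at h
  rw [Measure.map_apply (hT.measurable_branch i) hW]
  exact h.resolve_left hi

variable [Countable I]

theorem measure_eq_tsum (hT : HasBranches ρ m T δ ι) {W : Set X} (hW : MeasurableSet W) :
    m W = ∑' i, ρ i * m (ι i ⁻¹' W) := by
  have h := tsum_measure_preimage_singleton (μ := m.restrict W) (Set.countable_univ)
    fun i _ => hT.dMeasurable_label i
  rw [tsum_univ (f := fun i => m.restrict W (δ ⁻¹' {i})), Set.preimage_univ,
    Measure.restrict_apply_univ] at h
  simp_rw [hT.measure_preimage_branch _ hW, Set.inter_comm W, ← h,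
    Measure.restrict_apply (hT.dMeasurable_label _)]

theorem measurePreserving (hT : HasBranches ρ m T δ ι) (hρ : ∑' i, ρ i = 1) :
    MeasurePreserving T m m := by
  refine ⟨hT.measurable, Measure.ext fun W hW => ?_⟩
  rw [Measure.map_apply hT.measurable hW, hT.measure_eq_tsum (hT.measurable hW)]
  simp_rw [hT.preimage_branch_preimage]
  rw [ENNReal.tsum_mul_right, hρ, one_mul]

theorem ae_of_forall_ae_branch (hT : HasBranches ρ m T δ ι) (hρ : ∑' i, ρ i = 1)
    {p : X → Prop} (h : ∀ i, ∀ᵐ x ∂m, p (ι i x)) : ∀ᵐ x ∂m, p x := by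
  filter_upwards [(hT.measurePreserving hρ).quasiMeasurePreserving.ae (ae_all_iff.2 h)] with x hx
  simpa only [hT.branch_label_apply] using hx (δ x)

variable {m' : Measure X'} {T' : X' → X'} {δ' : X' → I} {ι' : I → X' → X'} {Φ : X → X'} {Ψ : X' → X}

theorem ae_injective_label_comp_branch (hT : HasBranches ρ m T δ ι)
    (hT' : HasBranches ρ m' T' δ' ι') (hρ : ∀ i, 0 < ρ i)
    (hΦT : ∀ᵐ x ∂m, Φ (T x) = T' (Φ x)) (hΨΦ : ∀ᵐ x ∂m, Ψ (Φ x) = x) :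
    ∀ᵐ x ∂m, Function.Injective fun i => δ' (Φ (ι i x)) := by
  have h : ∀ᵐ x ∂m, ∀ i, Ψ (Φ (ι i x)) = ι i x ∧ T' (Φ (ι i x)) = Φ x :=
    ae_all_iff.2 fun i => ((hT.quasiMeasurePreserving_branch (hρ i).ne').ae (hΨΦ.and hΦT)).mono
      fun x hx => ⟨hx.1, by rw [← hx.2, hT.apply_branch]⟩
  filter_upwards [h] with x hx i j hij
  -- `Φ (ι i x)` is recovered from its label, as the branch of `T'` through `Φ x`
  have hΦ : Φ (ι i x) = Φ (ι j x) := by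
    rw [← hT'.branch_label_apply (Φ (ι i x)), ← hT'.branch_label_apply (Φ (ι j x)), (hx i).2,
      (hx j).2]
    exact congrArg (ι' · (Φ x)) hij
  rw [← hT.label_branch i x, ← (hx i).1, hΦ, (hx j).1, hT.label_branch]

theorem tsum_measure_inter_label_comp_branch (hT : HasBranches ρ m T δ ι)
    (hT' : HasBranches ρ m' T' δ' ι') (hρ : ∑' i, ρ i = 1) (hΦ : MeasurePreserving Φ m m')
    (hΨ : MeasurePreserving Ψ m' m) (hΦT : ∀ᵐ x ∂m, Φ (T x) = T' (Φ x))
    (hΨΦ : ∀ᵐ x ∂m, Ψ (Φ x) = x) {S : Set X} (hS : MeasurableSet S) (j : I) :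
    ∑' i, ρ i * m (S ∩ ι i ⁻¹' (Φ ⁻¹' (δ' ⁻¹' {j}))) = ρ j * m S := by
  have hL : MeasurableSet (Φ ⁻¹' (δ' ⁻¹' {j})) := hΦ.measurable (hT'.dMeasurable_label j)
  have hS' : MeasurableSet (T' ⁻¹' (Ψ ⁻¹' S)) := hT'.measurable (hΨ.measurable hS)
  have hTS : (T ⁻¹' S : Set X) =ᵐ[m] Φ ⁻¹' (T' ⁻¹' (Ψ ⁻¹' S)) := by
    filter_upwards [hΦT, (hT.measurePreserving hρ).quasiMeasurePreserving.ae hΨΦ] with x h1 h2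
    change (T x ∈ S) = (Ψ (T' (Φ x)) ∈ S)
    rw [← h1, h2]
  calc ∑' i, ρ i * m (S ∩ ι i ⁻¹' (Φ ⁻¹' (δ' ⁻¹' {j})))
      = ∑' i, ρ i * m (ι i ⁻¹' (T ⁻¹' S ∩ Φ ⁻¹' (δ' ⁻¹' {j}))) := by
        simp_rw [Set.preimage_inter, hT.preimage_branch_preimage]
    _ = m (T ⁻¹' S ∩ Φ ⁻¹' (δ' ⁻¹' {j})) :=
        (hT.measure_eq_tsum ((hT.measurable hS).inter hL)).symm
    _ = m (Φ ⁻¹' (T' ⁻¹' (Ψ ⁻¹' S) ∩ δ' ⁻¹' {j})) := measure_congr (hTS.inter .rfl)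
    _ = m' (T' ⁻¹' (Ψ ⁻¹' S) ∩ δ' ⁻¹' {j}) :=
        hΦ.measure_preimage (hS'.inter (hT'.dMeasurable_label j)).nullMeasurableSet
    _ = ρ j * m S := by
        rw [← hT'.measure_preimage_branch j hS', hT'.preimage_branch_preimage,
          hΨ.measure_preimage hS.nullMeasurableSet]

theorem ae_weight_label_eq [IsFiniteMeasure m] (hT : HasBranches ρ m T δ ι)
    (hT' : HasBranches ρ m' T' δ' ι') (hρ : IsProbVector ρ) (hΦ : MeasurePreserving Φ m m')
    (hΨ : MeasurePreserving Ψ m' m) (hΦT : ∀ᵐ x ∂m, Φ (T x) = T' (Φ x))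
    (hΨΦ : ∀ᵐ x ∂m, Ψ (Φ x) = x) : ∀ᵐ x ∂m, ρ (δ' (Φ x)) = ρ (δ x) := by
  obtain ⟨G, hG, hGm, hGinj⟩ :=
    (hT.ae_injective_label_comp_branch hT' hρ.1 hΦT hΨΦ).exists_measurable_mem
  set L : I → I → Set X := fun i j => ι i ⁻¹' (Φ ⁻¹' (δ' ⁻¹' {j}))
  have hLm : ∀ i j, MeasurableSet (L i j) := fun i j =>
    hT.measurable_branch i (hΦ.measurable (hT'.dMeasurable_label j))
  -- on `G`, at most one branch is sent to the label `j`: the sum below collapses to one term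
  have hnull : ∀ i j, ρ i ≠ ρ j → m (G ∩ L i j) = 0 := by
    intro i j hij
    have h := hT.tsum_measure_inter_label_comp_branch hT' hρ.2 hΦ hΨ hΦT hΨΦ
      (hGm.inter (hLm i j)) j
    rw [tsum_eq_single i fun k hk => ?_, Set.inter_assoc, Set.inter_self] at h
    · by_contra h0
      exact hij ((ENNReal.mul_left_inj h0 (measure_ne_top _ _)).1 h)
    · rw [show G ∩ L i j ∩ L k j = ∅ from Set.eq_empty_of_forall_notMem fun x hx =>
        hk (hGinj x hx.1.1 (hx.2.trans hx.1.2.symm)), measure_empty, mul_zero]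
  refine hT.ae_of_forall_ae_branch hρ.2 fun i => ?_
  have : ∀ j, ∀ᵐ x ∂m, δ' (Φ (ι i x)) = j → ρ j = ρ i := fun j => by
    by_cases hij : ρ i = ρ j
    · exact ae_of_all _ fun _ _ => hij.symm
    filter_upwards [hG, measure_eq_zero_iff_ae_notMem.1 (hnull i j hij)] with x hxG hx hxj
    exact absurd ⟨hxG, hxj⟩ hx
  filter_upwards [ae_all_iff.2 this] with x hx
  rw [hT.label_branch]
  exact hx _ rfl

end HasBranches

section Uniform

variable {d : ℕ}

theorem measurePreserving_unif (e : Equiv.Perm (Fin d)) :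
    MeasurePreserving e (unif d) (unif d) := by
  refine ⟨measurable_of_finite _, Measure.ext fun s hs => ?_⟩
  rw [Measure.map_apply (measurable_of_finite _) hs, unif, Measure.smul_apply, Measure.smul_apply,
    Measure.count_apply (measurable_of_finite e hs), Measure.count_apply hs,
    Set.encard_preimage_of_injective_subset_range e.injective (by simp)]

instance [NeZero d] : IsProbabilityMeasure (unif d) :=
  ⟨by simp [unif, ENNReal.inv_mul_cancel (NeZero.ne (d : ℝ≥0∞)) (ENNReal.natCast_ne_top d)]⟩

theorem ae_unif_iff {p : Fin d → Prop} : (∀ᵐ y ∂unif d, p y) ↔ ∀ y, p y := by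
  rw [unif, Measure.ae_ennreal_smul_measure_eq (ENNReal.inv_ne_zero.2 (ENNReal.natCast_ne_top d)),
    Measure.ae_count_iff]

end Uniform

section Branching

variable {I : Type*} [Countable I] {ρ : I → ℝ≥0∞}

theorem HasBranches.skewProduct {X : Type*} [MeasurableSpace X] {m : Measure X} [SFinite m]
    {T : X → X} {δ : X → I} {ι : I → X → X} (hT : HasBranches ρ m T δ ι) {d : ℕ}
    (a : I → Equiv.Perm (Fin d)) :
    HasBranches ρ (m.prod (unif d)) (fun q => (T q.1, (a (δ q.1))⁻¹ q.2)) (fun q => δ q.1)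
      (fun i => Prod.map (ι i) (a i)) where
  measurable := by
    let : MeasurableSpace I := ⊤
    have hδ : Measurable δ := measurable_to_countable' hT.dMeasurable_label
    exact (hT.measurable.comp measurable_fst).prodMk
      ((measurable_of_countable fun p : I × Fin d => (a p.1)⁻¹ p.2).comp
        ((hδ.comp measurable_fst).prodMk measurable_snd))
  dMeasurable_label i := measurable_fst (hT.dMeasurable_label i)
  measurable_branch i := (hT.measurable_branch i).prodMap (measurable_of_finite _)
  apply_branch i q := by simp [hT.apply_branch, hT.label_branch]
  label_branch i q := hT.label_branch i q.1
  branch_label_apply q := by simp [hT.branch_label_apply]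
  smul_map_branch i := by
    rw [← Measure.map_prod_map _ _ (hT.measurable_branch i) (measurable_of_finite _),
      (measurePreserving_unif (a i)).map_eq, ← Measure.prod_smul_left, hT.smul_map_branch,
      ← Measure.restrict_univ (μ := unif d), Measure.prod_restrict, Measure.restrict_univ,
      Set.prod_univ]
    rfl

variable {μ : Measure (ℕ → I)}

theorem IsProductMeasure.hasBranches_shift (hμ : IsProductMeasure ρ μ) :
    HasBranches ρ μ shift (fun x => x 0) seqCons where
  measurable := measurable_shift
  dMeasurable_label := dMeasurable_apply_zero
  measurable_branch := measurable_seqCons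
  apply_branch _ _ := rfl
  label_branch _ _ := rfl
  branch_label_apply := seqCons_apply_zero_shift
  smul_map_branch := hμ.smul_map_seqCons

theorem IsProductMeasure.hasBranches_bernSkew (hμ : IsProductMeasure ρ μ) {d : ℕ}
    (a : I → Equiv.Perm (Fin d)) :
    HasBranches ρ (μ.prod (unif d)) (bernSkew a) (fun q => q.1 0)
      (fun i => Prod.map (seqCons i) (a i)) :=
  have : IsProbabilityMeasure μ := hμ.1
  hμ.hasBranches_shift.skewProduct a

end Branching

section Rigidity

variable {I : Type*} {ρ : I → ℝ≥0∞} {μ : Measure (ℕ → I)}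

theorem ae_forall_eq_wordProd_apply {β : Type*} {σ : I → Equiv.Perm β} {F : (ℕ → I) → β}
    (hshift : MeasurePreserving shift μ μ) (hF : ∀ᵐ x ∂μ, F x = σ (x 0) (F (shift x))) :
    ∀ᵐ x ∂μ, ∀ n, F x = wordProd σ (prefixWord n x) (F (shift^[n] x)) := by
  filter_upwards [ae_all_iff.2 fun k => (hshift.iterate k).quasiMeasurePreserving.ae hF]
    with x hx n
  induction n generalizing x with
  | zero => rfl
  | succ n ih =>
    rw [wordProd_prefixWord_succ, Equiv.Perm.mul_apply, Function.iterate_succ_apply,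
      ← ih (shift x) fun k => hx (k + 1)]
    exact hx 0

theorem IsProductMeasure.exists_apply_zero_eq_of_ae (hμ : IsProductMeasure ρ μ)
    (hρ : ∀ i, 0 < ρ i) {p : (ℕ → I) → Prop} (h : ∀ᵐ x ∂μ, p x) (i : I) :
    ∃ x, x 0 = i ∧ p x :=
  Measure.exists_mem_of_measure_ne_zero_of_ae (s := (fun x : ℕ → I => x 0) ⁻¹' {i})
    (by rw [hμ.measure_preimage_apply_zero]; exact (hρ i).ne') (ae_restrict_of_ae h)

variable [Countable I]

theorem measure_inter_le_of_forall_cyl [IsFiniteMeasure μ] {D S : Set (ℕ → I)}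
    (hS : MeasurableSet S) {t : ℝ≥0∞} (ht : t ≠ ∞)
    (h : ∀ (n : ℕ) (w : Fin n → I), μ (D ∩ cyl w) ≤ t * μ (cyl w)) : μ (D ∩ S) ≤ t * μ S := by
  have hprefix : ∀ A ∈ prefixSets I, μ (D ∩ A) ≤ t * μ A := by
    rintro _ ⟨n, W, rfl⟩
    have hD := measure_preimage_prefixWord (μ.restrict D) W
    simp only [Measure.restrict_apply (measurableSet_preimage_prefixWord W),
      Measure.restrict_apply (measurableSet_cyl _)] at hD
    rw [Set.inter_comm, hD, measure_preimage_prefixWord, ← ENNReal.tsum_mul_left]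
    exact ENNReal.tsum_le_tsum fun w => Set.inter_comm D _ ▸ h n w
  refine ENNReal.le_of_forall_pos_le_add fun ε hε _ => ?_
  have ht1 : t + 1 ≠ ∞ := ENNReal.add_ne_top.2 ⟨ht, ENNReal.one_ne_top⟩
  obtain ⟨A, hA, hAS⟩ := exists_prefixSets_measure_symmDiff_lt μ hS
    (ENNReal.div_pos (ENNReal.coe_pos.2 hε).ne' ht1)
  calc μ (D ∩ S) ≤ μ (D ∩ A) + μ (symmDiff A S) :=
        (measure_le_inter_add_sdiff μ _ A).trans (add_le_add
          (measure_mono fun x hx => ⟨hx.1.1, hx.2⟩)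
          (measure_mono fun x hx => Or.inr ⟨hx.1.2, hx.2⟩))
    _ ≤ t * (μ S + μ (symmDiff A S)) + μ (symmDiff A S) := by
        gcongr
        grw [hprefix A hA, ← tsub_le_iff_left.1 (le_measure_symmDiff (μ := μ) (s₁ := A))]
    _ = t * μ S + (t + 1) * μ (symmDiff A S) := by ring
    _ ≤ t * μ S + ε := by
        gcongr
        rw [← ENNReal.mul_div_cancel (a := t + 1) (by simp) ht1 (b := ε)]
        gcongr

variable {β : Type*} {σ : I → Equiv.Perm β} {F : (ℕ → I) → β}

theorem IsProductMeasure.measure_preimage_inter_cyl (hμ : IsProductMeasure ρ μ)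
    (hF : DMeasurable F)
    (hiter : ∀ᵐ x ∂μ, ∀ n, F x = wordProd σ (prefixWord n x) (F (shift^[n] x)))
    (c : β) {n : ℕ} (w : Fin n → I) :
    μ (F ⁻¹' {c} ∩ cyl w) = μ (cyl w) * μ (F ⁻¹' {(wordProd σ w)⁻¹ c}) := by
  rw [← hμ.measure_cyl_inter_preimage_shift_iterate w (hF _)]
  refine measure_congr (hiter.mono fun x hx => ?_)
  by_cases hw : x ∈ cyl w
  · have hxw : prefixWord n x = w := by rwa [cyl_eq_preimage_prefixWord] at hw
    change (F x = c ∧ x ∈ cyl w) = (x ∈ cyl w ∧ F (shift^[n] x) = (wordProd σ w)⁻¹ c)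
    rw [hx n, hxw, Equiv.Perm.eq_inv_iff_eq, eq_iff_iff]
    tauto
  · change (F x = c ∧ x ∈ cyl w) = (x ∈ cyl w ∧ _)
    simp [hw]

theorem IsProductMeasure.exists_fixed_ae_eq [Finite β] (hμ : IsProductMeasure ρ μ)
    (hρ : IsProbVector ρ) (hF : DMeasurable F) (hFσ : ∀ᵐ x ∂μ, F x = σ (x 0) (F (shift x))) :
    ∃ c, (∀ i, σ i c = c) ∧ ∀ᵐ x ∂μ, F x = c := by
  have : IsProbabilityMeasure μ := hμ.1
  have hshift := hμ.hasBranches_shift.measurePreserving hρ.2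
  have hcyl := hμ.measure_preimage_inter_cyl hF (ae_forall_eq_wordProd_apply hshift hFσ)
  have : Nonempty β := ⟨F hFσ.exists.choose⟩
  -- `c` is a value taken with maximal probability `t`; the bound `t ≤ t * t` forces `t = 1`
  obtain ⟨c, hc⟩ := Finite.exists_max fun c => μ (F ⁻¹' {c})
  have hpos : μ (F ⁻¹' {c}) ≠ 0 := by
    intro h0
    have h := measure_iUnion_null (μ := μ) fun b => nonpos_iff_eq_zero.1 ((hc b).trans h0.le)
    rw [Set.iUnion_eq_univ_iff.2 fun x => ⟨F x, rfl⟩, measure_univ] at h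
    exact one_ne_zero h
  have hle : μ (F ⁻¹' {c}) ≤ μ (F ⁻¹' {c}) * μ (F ⁻¹' {c}) := by
    simpa using measure_inter_le_of_forall_cyl (D := F ⁻¹' {c}) (hF c) (measure_ne_top μ _)
      fun n w => by grw [hcyl, mul_comm, hc]
  have h1 : μ (F ⁻¹' {c}) = 1 :=
    le_antisymm prob_le_one
      ((ENNReal.mul_le_mul_iff_right hpos (measure_ne_top _ _)).1 (by rwa [mul_one]))
  have hae : ∀ᵐ x ∂μ, F x = c :=
    (ae_iff_measure_eq (hF c).nullMeasurableSet).2 (by rw [measure_univ]; exact h1)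
  refine ⟨c, fun i => ?_, hae⟩
  obtain ⟨x, rfl, hx, hxc, hsxc⟩ := hμ.exists_apply_zero_eq_of_ae hρ.1
    (hFσ.and (hae.and (hshift.quasiMeasurePreserving.ae hae))) i
  exact (congrArg (σ (x 0)) hsxc).symm.trans (hx.symm.trans hxc)

end Rigidity

theorem ae_inverse_intertwining {X Y : Type*} [MeasurableSpace X] [MeasurableSpace Y]
    {μ : Measure X} {ν : Measure Y} {T : X → X} {S : Y → Y} {Φ : X → Y} {Ψ : Y → X}
    (hT : MeasurePreserving T μ μ) (hΨ : MeasurePreserving Ψ ν μ)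
    (hΦT : ∀ᵐ x ∂μ, Φ (T x) = S (Φ x)) (hΨΦ : ∀ᵐ x ∂μ, Ψ (Φ x) = x)
    (hΦΨ : ∀ᵐ y ∂ν, Φ (Ψ y) = y) : ∀ᵐ y ∂ν, Ψ (S y) = T (Ψ y) := by
  filter_upwards [hΦΨ, hΨ.quasiMeasurePreserving.ae hΦT,
    (hT.comp hΨ).quasiMeasurePreserving.ae hΨΦ] with y h1 h2 h3
  calc Ψ (S y) = Ψ (S (Φ (Ψ y))) := by rw [h1]
    _ = Ψ (Φ (T (Ψ y))) := by rw [h2]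
    _ = T (Ψ y) := h3

section SkewProduct

variable {X I : Type*} {d : ℕ}

def fiberMap (Φ : X × Fin d → X × Fin d) (x : X) : Fin d → Fin d := fun y => (Φ (x, y)).2

theorem dMeasurable_fiberMap [MeasurableSpace X] {Φ : X × Fin d → X × Fin d}
    (hΦ : Measurable Φ) : DMeasurable (fiberMap Φ) := fun f => by
  have : fiberMap Φ ⁻¹' {f} = ⋂ y, (fun x => (Φ (x, y)).2) ⁻¹' {f y} := by
    ext x
    simp [fiberMap, funext_iff]
  rw [this]
  exact .iInter fun y =>
    (measurable_snd.comp (hΦ.comp measurable_prodMk_right)) (measurableSet_singleton _)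

theorem forall_of_ae_prod_unif [MeasurableSpace X] {μ : Measure X} [NeZero μ]
    {p : Fin d → Prop} (h : ∀ᵐ q ∂μ.prod (unif d), p q.2) : ∀ y, p y :=
  ae_unif_iff.1 (Measure.ae_ae_of_ae_prod h).exists.choose_spec

theorem isomorphicMod0_bernSkew_of_mul_eq {μ : Measure (ℕ → I)} [SFinite μ]
    {a₁ a₂ : I → Equiv.Perm (Fin d)} {w₀ : Equiv.Perm (Fin d)}
    (hw₀ : ∀ i, a₂ i * w₀ = w₀ * a₁ i) :
    IsomorphicMod0 (μ.prod (unif d)) (bernSkew a₁) (μ.prod (unif d)) (bernSkew a₂) := by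
  have hmp (e : Equiv.Perm (Fin d)) :
      MeasurePreserving (Prod.map id e) (μ.prod (unif d)) (μ.prod (unif d)) :=
    (MeasurePreserving.id μ).prod (measurePreserving_unif e)
  have hcomm (i : I) : w₀ * (a₁ i)⁻¹ = (a₂ i)⁻¹ * w₀ := by
    rw [eq_inv_mul_iff_mul_eq, ← mul_assoc, hw₀, mul_assoc, mul_inv_cancel, mul_one]
  refine ⟨_, hmp w₀, ae_of_all _ fun q => ?_, _, hmp w₀⁻¹,
    ae_of_all _ fun q => Prod.ext rfl (w₀.symm_apply_apply q.2),
    ae_of_all _ fun q => Prod.ext rfl (w₀.apply_symm_apply q.2)⟩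
  exact congrArg (fun e : Equiv.Perm (Fin d) => (shift q.1, e q.2)) (hcomm (q.1 0))

variable {ρ : I → ℝ≥0∞} {μ : Measure (ℕ → I)} {a₁ a₂ : I → Equiv.Perm (Fin d)}
  {Φ Ψ : (ℕ → I) × Fin d → (ℕ → I) × Fin d}

theorem ae_fiberMap_eq_arrowCongr (hmod₂ : ∀ i i', ρ i = ρ i' → a₂ i = a₂ i')
    (hΦT : ∀ᵐ q ∂μ.prod (unif d), Φ (bernSkew a₁ q) = bernSkew a₂ (Φ q))
    (hρΦ : ∀ᵐ q ∂μ.prod (unif d), ρ ((Φ q).1 0) = ρ (q.1 0)) :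
    ∀ᵐ x ∂μ, fiberMap Φ x = (a₁ (x 0)).arrowCongr (a₂ (x 0)) (fiberMap Φ (shift x)) := by
  have h : ∀ᵐ q ∂μ.prod (unif d),
      (Φ (shift q.1, (a₁ (q.1 0))⁻¹ q.2)).2 = (a₂ (q.1 0))⁻¹ (Φ q).2 := by
    filter_upwards [hΦT, hρΦ] with q h1 h2
    rw [← hmod₂ _ _ h2]
    exact congrArg Prod.snd h1
  filter_upwards [Measure.ae_ae_of_ae_prod h] with x hx
  funext y
  have hy := ae_unif_iff.1 hx y
  simp only [Equiv.Perm.coe_inv] at hy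
  simp [fiberMap, hy]

variable [Countable I]

theorem exists_equivariant_ae_snd_eq [NeZero d] (hρ : IsProbVector ρ)
    (hμ : IsProductMeasure ρ μ) (hmod₂ : ∀ i i', ρ i = ρ i' → a₂ i = a₂ i')
    (hΦ : MeasurePreserving Φ (μ.prod (unif d)) (μ.prod (unif d)))
    (hΨ : MeasurePreserving Ψ (μ.prod (unif d)) (μ.prod (unif d)))
    (hΦT : ∀ᵐ q ∂μ.prod (unif d), Φ (bernSkew a₁ q) = bernSkew a₂ (Φ q))
    (hΨΦ : ∀ᵐ q ∂μ.prod (unif d), Ψ (Φ q) = q) :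
    ∃ h : Fin d → Fin d, (∀ i y, a₂ i (h y) = h (a₁ i y)) ∧
      ∀ᵐ q ∂μ.prod (unif d), (Φ q).2 = h q.2 := by
  have : IsProbabilityMeasure μ := hμ.1
  have hρΦ := (hμ.hasBranches_bernSkew a₁).ae_weight_label_eq (hμ.hasBranches_bernSkew a₂) hρ
    hΦ hΨ hΦT hΨΦ
  obtain ⟨h, hfix, hh⟩ := hμ.exists_fixed_ae_eq (σ := fun i => (a₁ i).arrowCongr (a₂ i)) hρ
    (dMeasurable_fiberMap hΦ.measurable) (ae_fiberMap_eq_arrowCongr hmod₂ hΦT hρΦ)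
  refine ⟨h, fun i y => ?_, measurePreserving_fst.quasiMeasurePreserving.ae hh |>.mono
    fun q hq => congrFun hq q.2⟩
  simpa using congrFun (hfix i) (a₁ i y)

end SkewProduct

theorem stmt19_general {I : Type} [Countable I]
    (ρ : I → ℝ≥0∞) (hρ : IsProbVector ρ)
    (μ : Measure (ℕ → I)) (hμ : IsProductMeasure ρ μ)
    (d : ℕ) (a₁ a₂ : I → Equiv.Perm (Fin d))
    (hmod₁ : ∀ i i', ρ i = ρ i' → a₁ i = a₁ i')
    (hmod₂ : ∀ i i', ρ i = ρ i' → a₂ i = a₂ i') :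
    IsomorphicMod0 (μ.prod (unif d)) (bernSkew a₁)
        (μ.prod (unif d)) (bernSkew a₂) ↔
      ∃ w₀ : Equiv.Perm (Fin d), ∀ i, a₂ i * w₀ = w₀ * a₁ i := by
  have : IsProbabilityMeasure μ := hμ.1
  refine ⟨fun hiso => ?_, fun ⟨w₀, hw₀⟩ => isomorphicMod0_bernSkew_of_mul_eq hw₀⟩
  rcases eq_or_ne d 0 with rfl | hd
  · exact ⟨1, fun i => Subsingleton.elim _ _⟩
  have : NeZero d := ⟨hd⟩
  obtain ⟨Φ, hΦ, hΦT, Ψ, hΨ, hΨΦ, hΦΨ⟩ := hiso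
  have hΨT := ae_inverse_intertwining ((hμ.hasBranches_bernSkew a₁).measurePreserving hρ.2)
    hΨ hΦT hΨΦ hΦΨ
  obtain ⟨h, hh, hΦh⟩ := exists_equivariant_ae_snd_eq hρ hμ hmod₂ hΦ hΨ hΦT hΨΦ
  obtain ⟨k, -, hΨk⟩ := exists_equivariant_ae_snd_eq hρ hμ hmod₁ hΨ hΦ hΨT hΦΨ
  have hkh : Function.LeftInverse k h := forall_of_ae_prod_unif (μ := μ) (by
    filter_upwards [hΨΦ, hΦh, hΦ.quasiMeasurePreserving.ae hΨk] with q h1 h2 h3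
    rw [← h2, ← h3, h1])
  exact ⟨.ofBijective h (Finite.injective_iff_bijective.1 hkh.injective),
    fun i => Equiv.ext (hh i)⟩

/-- Let `a₁ a₂ : I → 𝒜_d` be constant on the level sets of `ρ` and
generate transitive subgroups of `𝒜_d`. The skew products `T̄₁` and `T̄₂` on
`X_ρ × Y_d` (the Markov shifts of the `d`-extensions `Ī_{a₁}, Ī_{a₂}`) are
isomorphic mod 0 iff `a₁` and `a₂` are conjugate in `𝒜_d`. -/
theorem stmt19 {I : Type} [Countable I] [Nontrivial I]
    (ρ : I → ℝ≥0∞) (hρ : IsProbVector ρ)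
    (μ : Measure (ℕ → I)) (hμ : IsProductMeasure ρ μ)
    (d : ℕ) (a₁ a₂ : I → Equiv.Perm (Fin d))
    (hmod₁ : ∀ i i', ρ i = ρ i' → a₁ i = a₁ i')
    (hmod₂ : ∀ i i', ρ i = ρ i' → a₂ i = a₂ i')
    (htr₁ : ∀ y y' : Fin d, ∃ g ∈ Subgroup.closure (Set.range a₁), g y = y')
    (htr₂ : ∀ y y' : Fin d, ∃ g ∈ Subgroup.closure (Set.range a₂), g y = y') :
    IsomorphicMod0 (μ.prod (unif d)) (bernSkew a₁)
        (μ.prod (unif d)) (bernSkew a₂) ↔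
      ∃ w₀ : Equiv.Perm (Fin d), ∀ i, a₂ i * w₀ = w₀ * a₁ i :=
  stmt19_general ρ hρ μ hμ d a₁ a₂ hmod₁ hmod₂

end OneSidedMarkov
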